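/- arXiv:1702.00606 — 6 statements merged into one kernel-verified Lean document; each statement's English description precedes it below -/
import Mathlib

section
/- Let σ2 > 0, B > 0, β(x) = σ2·(2^{x/B} − 1), β'(x) = (σ2·ln 2 / B)·2^{x/B}, g(x) = β(x) − x·β'(x), and fix g̃ > 0, p_c > 0, μ > 0, α > 0, κ > 0, C > 0, R > 0, T > 0. For λ > 0 let r(λ) > 0 be the unique solution of g(r) = −g̃·(μ/λ + p_c), and let ℓ(λ) = max(R − √((T²/(3·κ·C³))·(α/λ + β'(r(λ))/g̃)), 0). Then for any 0 < λ₁ < λ₂ one has r(λ₂) < r(λ₁) and ℓ(λ₁) ≤ ℓ(λ₂). -/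
/-! For `g x = β x - x * β' x` one has `g' x = -x * β'' x`, so `g` is strictly decreasing on
`[0, ∞)` as soon as `β` is strictly convex there, which the exponential `β` is. The defining
equation `g (r λ) = -g̃ (μ / λ + p_c)` has a right-hand side increasing in `λ`, hence `r` decreases.
Then `α / λ + β' (r λ) / g̃` decreases in `λ` (as `β'` is increasing), and so `ℓ` increases. -/

open Real Set

theorem strictAntiOn_sub_mul_deriv {f f' f'' : ℝ → ℝ}
    (hf : ∀ x, HasDerivAt f (f' x) x) (hf' : ∀ x, HasDerivAt f' (f'' x) x)
    (hf''_pos : ∀ x, 0 < x → 0 < f'' x) :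
    StrictAntiOn (fun x => f x - x * f' x) (Ici 0) := by
  have hderiv : ∀ x, HasDerivAt (fun x => f x - x * f' x) (-(x * f'' x)) x := fun x =>
    ((hf x).sub ((hasDerivAt_id' x).mul (hf' x))).congr_deriv (by ring)
  refine strictAntiOn_of_deriv_neg (convex_Ici 0)
    (fun x _ => (hderiv x).continuousAt.continuousWithinAt) fun x hx => ?_
  rw [interior_Ici] at hx
  rw [(hderiv x).deriv, neg_lt_zero]
  exact mul_pos hx (hf''_pos x hx)

theorem hasDerivAt_const_mul_two_rpow_div (c B x : ℝ) :
    HasDerivAt (fun y => c * (2 : ℝ) ^ (y / B)) (c * log 2 / B * (2 : ℝ) ^ (x / B)) x := by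
  have hexp := (hasStrictDerivAt_const_rpow two_pos (x / B)).hasDerivAt.comp x
    ((hasDerivAt_id' x).div_const B)
  exact (hexp.const_mul c).congr_deriv (by ring)

theorem stmt4_general (σ2 B : ℝ) (hσ2 : 0 < σ2) (hB : 0 < B)
    (β β' g : ℝ → ℝ)
    (hβ : ∀ x, β x = σ2 * ((2 : ℝ) ^ (x / B) - 1))
    (hβ' : ∀ x, β' x = σ2 * Real.log 2 / B * (2 : ℝ) ^ (x / B))
    (hg : ∀ x, g x = β x - x * β' x)
    (gtld pc μ α κ C R T : ℝ)
    (hgtld : 0 < gtld) (hμ : 0 < μ) (hα : 0 < α)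
    (hκ : 0 < κ) (hC : 0 < C)
    (r : ℝ → ℝ)
    (hr : ∀ lam : ℝ, 0 < lam → 0 < r lam ∧ g (r lam) = -(gtld * (μ / lam + pc)))
    (ℓ : ℝ → ℝ)
    (hℓ : ∀ lam : ℝ, ℓ lam =
      max (R - Real.sqrt (T ^ 2 / (3 * κ * C ^ 3) * (α / lam + β' (r lam) / gtld))) 0)
    (lam₁ lam₂ : ℝ) (hlam₁ : 0 < lam₁) (hlt : lam₁ < lam₂) :
    r lam₂ < r lam₁ ∧ ℓ lam₁ ≤ ℓ lam₂ := by
  have hlog2 : 0 < log 2 := log_pos one_lt_two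
  obtain ⟨hr₁_pos, hr₁⟩ := hr lam₁ hlam₁
  obtain ⟨hr₂_pos, hr₂⟩ := hr lam₂ (hlam₁.trans hlt)
  have hβ_eq : β = fun y => σ2 * (2 : ℝ) ^ (y / B) - σ2 := funext fun y => by rw [hβ]; ring
  have hβ_deriv : ∀ x, HasDerivAt β (β' x) x := fun x => by
    rw [hβ_eq, hβ']
    exact (hasDerivAt_const_mul_two_rpow_div σ2 B x).sub_const σ2
  have hβ'_deriv : ∀ x, HasDerivAt β' (σ2 * log 2 / B * log 2 / B * (2 : ℝ) ^ (x / B)) x :=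
    fun x => by
      simpa only [← funext hβ'] using hasDerivAt_const_mul_two_rpow_div (σ2 * log 2 / B) B x
  have hg_anti : StrictAntiOn g (Ici 0) := by
    rw [funext hg]
    exact strictAntiOn_sub_mul_deriv hβ_deriv hβ'_deriv fun x _ => by positivity
  have hg_lt : g (r lam₁) < g (r lam₂) := by
    rw [hr₁, hr₂]
    gcongr
  have hr_lt : r lam₂ < r lam₁ := (hg_anti.lt_iff_gt hr₁_pos.le hr₂_pos.le).mp hg_lt
  refine ⟨hr_lt, ?_⟩
  rw [hℓ, hℓ, hβ', hβ']
  gcongr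
  exact one_le_two

/-- Remark 1, property 3: a larger dual variable `λ` yields a smaller optimal
offloading rate `r(λ)` and a larger (well, no smaller) number of offloaded
bits `ℓ(λ)`. -/
theorem stmt4 (σ2 B : ℝ) (hσ2 : 0 < σ2) (hB : 0 < B)
    (β β' g : ℝ → ℝ)
    (hβ : ∀ x, β x = σ2 * ((2 : ℝ) ^ (x / B) - 1))
    (hβ' : ∀ x, β' x = σ2 * Real.log 2 / B * (2 : ℝ) ^ (x / B))
    (hg : ∀ x, g x = β x - x * β' x)
    (gtld pc μ α κ C R T : ℝ)
    (hgtld : 0 < gtld) (hpc : 0 < pc) (hμ : 0 < μ) (hα : 0 < α)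
    (hκ : 0 < κ) (hC : 0 < C) (hR : 0 < R) (hT : 0 < T)
    (r : ℝ → ℝ)
    (hr : ∀ lam : ℝ, 0 < lam → 0 < r lam ∧ g (r lam) = -(gtld * (μ / lam + pc)))
    (ℓ : ℝ → ℝ)
    (hℓ : ∀ lam : ℝ, ℓ lam =
      max (R - Real.sqrt (T ^ 2 / (3 * κ * C ^ 3) * (α / lam + β' (r lam) / gtld))) 0)
    (lam₁ lam₂ : ℝ) (hlam₁ : 0 < lam₁) (hlt : lam₁ < lam₂) :
    r lam₂ < r lam₁ ∧ ℓ lam₁ ≤ ℓ lam₂ :=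
  stmt4_general σ2 B hσ2 hB β β' g hβ hβ' hg gtld pc μ α κ C R T hgtld hμ hα hκ hC r hr ℓ hℓ lam₁
    lam₂ hlam₁ hlt
end

section
/- Let σ2 > 0, B > 0, β(x) = σ2·(2^{x/B} − 1), β'(x) = (σ2·ln 2 / B)·2^{x/B}, and fix λ > 0, μ ≥ 0, α > 0, κ > 0, C > 0, R > 0, T > 0, g̃ > 0, p_c > 0. Define J(t, ℓ) = α·ℓ + λ·κ·C³·(R − ℓ)³/T² + (λ·t/g̃)·β(ℓ/t) + λ·p_c·t + μ·t on D = {(t, ℓ) : t > 0, 0 ≤ ℓ ≤ R} ∪ {(0, 0)}, with the β-term defined as 0 at (0, 0). Let r* > 0 be the unique solution of β(r) − r·β'(r) = −g̃·(μ/λ + p_c), let ℓ* = max(R − √((T²/(3·κ·C³))·(α/λ + β'(r*)/g̃)), 0) and t* = ℓ*/r*. Then (t*, ℓ*) ∈ D and J(t*, ℓ*) ≤ J(t, ℓ) for every (t, ℓ) ∈ D. -/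
/-!
Since `2^x` is convex, `β` lies above its tangent line at `r*`; by the defining equation of `r*`
this tangent line passes through `(0, -g̃ (μ/λ + p_c))`, so the perspective term
`t β(ℓ/t) + g̃ (μ/λ + p_c) t` is at least `β'(r*) ℓ`, with equality when `ℓ = r* t`.
Eliminating `t` leaves the one-variable problem of minimising `k ℓ + A (R - ℓ)³` over `[0, R]`,
a convex cubic whose stationary point is `R - √(k / 3A)`; clipping it at `0` gives `ℓ*`.
-/

open Real

theorem rpow_mul_one_add_log_mul_sub_le_rpow {a : ℝ} (ha : 0 < a) (x y : ℝ) :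
    a ^ x * (1 + log a * (y - x)) ≤ a ^ y :=
  calc a ^ x * (1 + log a * (y - x)) ≤ a ^ x * a ^ (y - x) := by
        gcongr
        rw [rpow_def_of_pos ha]
        linarith [add_one_le_exp (log a * (y - x))]
    _ = a ^ y := by rw [← rpow_add ha, add_sub_cancel]

theorem shannon_tangent_le {σ2 : ℝ} (hσ2 : 0 ≤ σ2) (B r₀ r : ℝ) :
    σ2 * ((2 : ℝ) ^ (r₀ / B) - 1) + σ2 * log 2 / B * (2 : ℝ) ^ (r₀ / B) * (r - r₀)
      ≤ σ2 * ((2 : ℝ) ^ (r / B) - 1) :=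
  calc _ = σ2 * ((2 : ℝ) ^ (r₀ / B) * (1 + log 2 * (r / B - r₀ / B)) - 1) := by ring
    _ ≤ σ2 * ((2 : ℝ) ^ (r / B) - 1) := by
        gcongr
        exact rpow_mul_one_add_log_mul_sub_le_rpow two_pos _ _

section Perspective

variable {f : ℝ → ℝ} {r₀ d c : ℝ}

theorem le_perspective_add_of_tangent (htan : ∀ r, f r₀ + d * (r - r₀) ≤ f r)
    (hsol : f r₀ - r₀ * d = -c) {t ℓ : ℝ} (ht : 0 ≤ t) (hℓ : t = 0 → ℓ = 0) :
    d * ℓ ≤ (if t = 0 then 0 else t * f (ℓ / t)) + c * t := by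
  split_ifs with h
  · simp [h, hℓ h]
  · calc d * ℓ = t * (f r₀ + d * (ℓ / t - r₀)) + c * t := by
          field_simp
          linear_combination (-t) * hsol
      _ ≤ t * f (ℓ / t) + c * t := by gcongr; exact htan _

theorem perspective_add_eq_of_solution (hsol : f r₀ - r₀ * d = -c) (hr₀ : r₀ ≠ 0) (ℓ : ℝ) :
    (if ℓ / r₀ = 0 then 0 else ℓ / r₀ * f (ℓ / (ℓ / r₀))) + c * (ℓ / r₀) = d * ℓ := by
  split_ifs with h
  · obtain rfl : ℓ = 0 := by simpa [hr₀] using h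
    simp
  · have hℓ : ℓ ≠ 0 := by rintro rfl; simp at h
    calc ℓ / r₀ * f (ℓ / (ℓ / r₀)) + c * (ℓ / r₀) = ℓ / r₀ * (f r₀ + c) := by
          rw [div_div_cancel₀ hℓ]; ring
      _ = d * ℓ := by rw [show f r₀ + c = r₀ * d by linarith]; field_simp

end Perspective

-- For `s ≤ R` the gap to the value at `R - s` factors as `A (R - ℓ - s)² (R - ℓ + 2s)`.
theorem linear_add_cube_le {A k R ℓ : ℝ} (hA : 0 < A) (hk : 0 ≤ k) (hℓ₀ : 0 ≤ ℓ) (hℓR : ℓ ≤ R) :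
    k * max (R - √(k / (3 * A))) 0 + A * (R - max (R - √(k / (3 * A))) 0) ^ 3
      ≤ k * ℓ + A * (R - ℓ) ^ 3 := by
  set s := √(k / (3 * A))
  set m := max (R - s) 0
  have hs₀ : 0 ≤ s := sqrt_nonneg _
  have hks : k = 3 * A * s ^ 2 := by
    rw [sq_sqrt (by positivity)]; field_simp
  rw [hks]
  rcases le_total s R with hsR | hRs
  · have hm : m = R - s := max_eq_left (by linarith)
    rw [hm]
    have : 0 ≤ A * ((R - ℓ - s) ^ 2 * ((R - ℓ) + 2 * s)) := by
      have : 0 ≤ R - ℓ := by linarith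
      positivity
    nlinarith
  · have hm : m = 0 := max_eq_right (by linarith)
    rw [hm]
    have hsum_le : (R - ℓ) ^ 2 + (R - ℓ) * R + R ^ 2 ≤ 3 * s ^ 2 := by
      nlinarith [mul_nonneg hℓ₀ (sub_nonneg.2 hℓR)]
    have : 0 ≤ ℓ * A * (3 * s ^ 2 - ((R - ℓ) ^ 2 + (R - ℓ) * R + R ^ 2)) := by
      have := sub_nonneg.2 hsum_le
      positivity
    nlinarith

theorem stmt5_general (σ2 B : ℝ) (hσ2 : 0 < σ2) (hB : 0 < B)
    (β β' : ℝ → ℝ)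
    (hβ : ∀ x, β x = σ2 * ((2 : ℝ) ^ (x / B) - 1))
    (hβ' : ∀ x, β' x = σ2 * Real.log 2 / B * (2 : ℝ) ^ (x / B))
    (lam μ α κ C R T gtld pc : ℝ)
    (hlam : 0 < lam) (hα : 0 < α) (hκ : 0 < κ) (hC : 0 < C)
    (hR : 0 < R) (hT : 0 < T) (hgtld : 0 < gtld)
    (J : ℝ → ℝ → ℝ)
    (hJ : ∀ t ℓ : ℝ, J t ℓ = α * ℓ + lam * κ * C ^ 3 * (R - ℓ) ^ 3 / T ^ 2
      + (if t = 0 then 0 else lam * t / gtld * β (ℓ / t)) + lam * pc * t + μ * t)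
    (rstar : ℝ) (hrstar : 0 < rstar)
    (hrsol : β rstar - rstar * β' rstar = -(gtld * (μ / lam + pc)))
    (ℓstar tstar : ℝ)
    (hℓstar : ℓstar =
      max (R - Real.sqrt (T ^ 2 / (3 * κ * C ^ 3) * (α / lam + β' rstar / gtld))) 0)
    (htstar : tstar = ℓstar / rstar) :
    ((0 < tstar ∧ 0 ≤ ℓstar ∧ ℓstar ≤ R) ∨ (tstar = 0 ∧ ℓstar = 0)) ∧
    ∀ t ℓ : ℝ, ((0 < t ∧ 0 ≤ ℓ ∧ ℓ ≤ R) ∨ (t = 0 ∧ ℓ = 0)) →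
      J tstar ℓstar ≤ J t ℓ := by
  have hβtan (r : ℝ) : β rstar + β' rstar * (r - rstar) ≤ β r := by
    rw [hβ, hβ, hβ']; exact shannon_tangent_le hσ2.le B rstar r
  set c := gtld * (μ / lam + pc) with hc
  set A := lam * κ * C ^ 3 / T ^ 2 with hA
  set k := α + lam / gtld * β' rstar with hk
  have hJ' (t ℓ : ℝ) : J t ℓ =
      α * ℓ + A * (R - ℓ) ^ 3 + lam / gtld * ((if t = 0 then 0 else t * β (ℓ / t)) + c * t) := by
    rw [hJ, hA, hc]; split_ifs <;> field_simp <;> ring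
  have hk₀ : 0 ≤ k := by
    have : 0 ≤ β' rstar := by rw [hβ']; positivity
    positivity
  have hℓstar' : ℓstar = max (R - √(k / (3 * A))) 0 := by
    rw [hℓstar, hk, hA]; congr 3; field_simp
  have hJ_ge (t ℓ : ℝ) (ht : 0 ≤ t) (hℓ : t = 0 → ℓ = 0) :
      k * ℓ + A * (R - ℓ) ^ 3 ≤ J t ℓ :=
    calc k * ℓ + A * (R - ℓ) ^ 3 = α * ℓ + A * (R - ℓ) ^ 3 + lam / gtld * (β' rstar * ℓ) := by
          ring
      _ ≤ J t ℓ := by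
          rw [hJ']; gcongr; exact le_perspective_add_of_tangent hβtan hrsol ht hℓ
  have hJ_star : J tstar ℓstar = k * ℓstar + A * (R - ℓstar) ^ 3 := by
    rw [hJ', htstar, perspective_add_eq_of_solution hrsol hrstar.ne']; ring
  have hℓstar₀ : 0 ≤ ℓstar := hℓstar'.symm ▸ le_max_right _ _
  refine ⟨?_, fun t ℓ hmem => ?_⟩
  · rcases hℓstar₀.eq_or_lt with h | h
    · exact .inr ⟨by simp [htstar, ← h], h.symm⟩
    · refine .inl ⟨htstar ▸ div_pos h hrstar, h.le, hℓstar'.symm ▸ max_le ?_ hR.le⟩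
      linarith [sqrt_nonneg (k / (3 * A))]
  obtain ⟨ht, hℓ₀, hℓR, hℓ⟩ : 0 ≤ t ∧ 0 ≤ ℓ ∧ ℓ ≤ R ∧ (t = 0 → ℓ = 0) := by
    rcases hmem with ⟨ht, hℓ₀, hℓR⟩ | ⟨rfl, rfl⟩
    · exact ⟨ht.le, hℓ₀, hℓR, fun h => absurd h ht.ne'⟩
    · exact ⟨le_rfl, le_rfl, hR.le, fun _ => rfl⟩
  calc J tstar ℓstar = k * ℓstar + A * (R - ℓstar) ^ 3 := hJ_star
    _ ≤ k * ℓ + A * (R - ℓ) ^ 3 := hℓstar' ▸ linear_add_cube_le (by positivity) hk₀ hℓ₀ hℓR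
    _ ≤ J t ℓ := hJ_ge t ℓ ht hℓ

/-- Lemma 2, nontrivial case `λ > 0`: the semi-closed-form point `(t*, ℓ*)`,
with offloading rate `r*` solving `β(r) − r·β'(r) = −g̃·(μ/λ + p_c)`, globally
minimizes the Lagrangian subproblem objective `J` over
`D = {(t, ℓ) : t > 0, 0 ≤ ℓ ≤ R} ∪ {(0,0)}`. -/
theorem stmt5 (σ2 B : ℝ) (hσ2 : 0 < σ2) (hB : 0 < B)
    (β β' : ℝ → ℝ)
    (hβ : ∀ x, β x = σ2 * ((2 : ℝ) ^ (x / B) - 1))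
    (hβ' : ∀ x, β' x = σ2 * Real.log 2 / B * (2 : ℝ) ^ (x / B))
    (lam μ α κ C R T gtld pc : ℝ)
    (hlam : 0 < lam) (hμ : 0 ≤ μ) (hα : 0 < α) (hκ : 0 < κ) (hC : 0 < C)
    (hR : 0 < R) (hT : 0 < T) (hgtld : 0 < gtld) (hpc : 0 < pc)
    (J : ℝ → ℝ → ℝ)
    (hJ : ∀ t ℓ : ℝ, J t ℓ = α * ℓ + lam * κ * C ^ 3 * (R - ℓ) ^ 3 / T ^ 2
      + (if t = 0 then 0 else lam * t / gtld * β (ℓ / t)) + lam * pc * t + μ * t)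
    (rstar : ℝ) (hrstar : 0 < rstar)
    (hrsol : β rstar - rstar * β' rstar = -(gtld * (μ / lam + pc)))
    (ℓstar tstar : ℝ)
    (hℓstar : ℓstar =
      max (R - Real.sqrt (T ^ 2 / (3 * κ * C ^ 3) * (α / lam + β' rstar / gtld))) 0)
    (htstar : tstar = ℓstar / rstar) :
    ((0 < tstar ∧ 0 ≤ ℓstar ∧ ℓstar ≤ R) ∨ (tstar = 0 ∧ ℓstar = 0)) ∧
    ∀ t ℓ : ℝ, ((0 < t ∧ 0 ≤ ℓ ∧ ℓ ≤ R) ∨ (t = 0 ∧ ℓ = 0)) →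
      J tstar ℓstar ≤ J t ℓ :=
  stmt5_general σ2 B hσ2 hB β β' hβ hβ' lam μ α κ C R T gtld pc hlam hα hκ hC hR hT hgtld J hJ rstar
    hrstar hrsol ℓstar tstar hℓstar htstar
end

section
/- Let σ2 > 0, B > 0, β(x) = σ2·(2^{x/B} − 1), and fix λ > 0, μ ≥ 0, α > 0, κ > 0, C > 0, R > 0, T > 0, g̃ > 0, p_c > 0. Define J(t, ℓ) = α·ℓ + λ·κ·C³·(R − ℓ)³/T² + (λ·t/g̃)·β(ℓ/t) + λ·p_c·t + μ·t on D = {(t, ℓ) : t > 0, 0 ≤ ℓ ≤ R} ∪ {(0, 0)}, with the β-term defined as 0 at (0, 0). Then for every t > 0, the point (t, R) is not a minimizer of J on D: there exists (t', ℓ') ∈ D with J(t', ℓ') < J(t, R). -/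
/-! Keep the offloading time `t` and offload `R - ε` bits instead of `R`. The rate term
`t β(ℓ / t)` and the MEC energy `α ℓ` are nondecreasing in `ℓ`, the latter with slope `α > 0`,
while the local-computing energy `A (R - ℓ)³`, with `A = λ κ C³ / T²`, grows only like `ε³`. For small `ε > 0` the
saving `α ε` therefore beats the extra local cost `A ε³`. -/

open Filter Topology

lemma eventually_mul_pow_three_lt (A : ℝ) {α : ℝ} (hα : 0 < α) :
    ∀ᶠ ε in 𝓝[>] (0 : ℝ), A * ε ^ 3 < α * ε := by
  have hlim : Tendsto (fun ε : ℝ => A * ε ^ 2) (𝓝 0) (𝓝 0) := by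
    simpa using (by fun_prop : Continuous fun ε : ℝ => A * ε ^ 2).tendsto 0
  filter_upwards [nhdsWithin_le_nhds (hlim.eventually (gt_mem_nhds hα)), self_mem_nhdsWithin]
    with ε hsq (hε : 0 < ε)
  calc A * ε ^ 3 = A * ε ^ 2 * ε := by ring
    _ < α * ε := mul_lt_mul_of_pos_right hsq hε

lemma monotone_const_mul_two_rpow_div_sub_one {σ2 B : ℝ} (hσ2 : 0 ≤ σ2) (hB : 0 ≤ B) :
    Monotone fun x : ℝ => σ2 * ((2 : ℝ) ^ (x / B) - 1) := by
  intro x y hxy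
  dsimp only
  gcongr
  norm_num

theorem stmt6_general (σ2 B : ℝ) (hσ2 : 0 < σ2) (hB : 0 < B)
    (β : ℝ → ℝ)
    (hβ : ∀ x, β x = σ2 * ((2 : ℝ) ^ (x / B) - 1))
    (lam μ α κ C R T gtld pc : ℝ)
    (hlam : 0 < lam) (hα : 0 < α)
    (hR : 0 < R) (hgtld : 0 < gtld)
    (J : ℝ → ℝ → ℝ)
    (hJ : ∀ t ℓ : ℝ, J t ℓ = α * ℓ + lam * κ * C ^ 3 * (R - ℓ) ^ 3 / T ^ 2
      + (if t = 0 then 0 else lam * t / gtld * β (ℓ / t)) + lam * pc * t + μ * t) :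
    ∀ t : ℝ, 0 < t →
      ∃ t' ℓ' : ℝ, ((0 < t' ∧ 0 ≤ ℓ' ∧ ℓ' ≤ R) ∨ (t' = 0 ∧ ℓ' = 0)) ∧
        J t' ℓ' < J t R := by
  intro t ht
  have hβ_mono : Monotone β := by
    rw [funext hβ]
    exact monotone_const_mul_two_rpow_div_sub_one hσ2.le hB.le
  obtain ⟨ε, ⟨hcube, hεR⟩, hε⟩ :=
    (((eventually_mul_pow_three_lt (lam * κ * C ^ 3 / T ^ 2) hα).and
      (nhdsWithin_le_nhds (ge_mem_nhds hR))).and self_mem_nhdsWithin).exists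
  refine ⟨t, R - ε, Or.inl ⟨ht, by linarith, by linarith⟩, ?_⟩
  have hrate : lam * t / gtld * β ((R - ε) / t) ≤ lam * t / gtld * β (R / t) :=
    mul_le_mul_of_nonneg_left (hβ_mono (by gcongr; linarith)) (by positivity)
  rw [div_mul_eq_mul_div] at hcube
  rw [hJ, hJ, if_neg ht.ne', if_neg ht.ne', sub_sub_cancel, sub_self]
  have hfull : lam * κ * C ^ 3 * 0 ^ 3 / T ^ 2 = 0 := by simp
  linarith

/-- Remark 1, property 2: offloading all `R` bits is always suboptimal — for
every `t > 0`, the point `(t, R)` is not a minimizer of the Lagrangian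
subproblem objective `J` on `D = {(t, ℓ) : t > 0, 0 ≤ ℓ ≤ R} ∪ {(0,0)}`. -/
theorem stmt6 (σ2 B : ℝ) (hσ2 : 0 < σ2) (hB : 0 < B)
    (β : ℝ → ℝ)
    (hβ : ∀ x, β x = σ2 * ((2 : ℝ) ^ (x / B) - 1))
    (lam μ α κ C R T gtld pc : ℝ)
    (hlam : 0 < lam) (hμ : 0 ≤ μ) (hα : 0 < α) (hκ : 0 < κ) (hC : 0 < C)
    (hR : 0 < R) (hT : 0 < T) (hgtld : 0 < gtld) (hpc : 0 < pc)
    (J : ℝ → ℝ → ℝ)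
    (hJ : ∀ t ℓ : ℝ, J t ℓ = α * ℓ + lam * κ * C ^ 3 * (R - ℓ) ^ 3 / T ^ 2
      + (if t = 0 then 0 else lam * t / gtld * β (ℓ / t)) + lam * pc * t + μ * t) :
    ∀ t : ℝ, 0 < t →
      ∃ t' ℓ' : ℝ, ((0 < t' ∧ 0 ≤ ℓ' ∧ ℓ' ≤ R) ∨ (t' = 0 ∧ ℓ' = 0)) ∧
        J t' ℓ' < J t R :=
  stmt6_general σ2 B hσ2 hB β hβ lam μ α κ C R T gtld pc hlam hα hR hgtld J hJ
end

section
/- Let σ2 > 0, B > 0, β(x) = σ2·(2^{x/B} − 1), β'(x) = (σ2·ln 2 / B)·2^{x/B}, g(x) = β(x) − x·β'(x), and fix λ > 0, μ ≥ 0, α > 0, κ > 0, C > 0, R > 0, T > 0, g̃ > 0, p_c > 0. Define J(t, ℓ) = α·ℓ + λ·κ·C³·(R − ℓ)³/T² + (λ·t/g̃)·β(ℓ/t) + λ·p_c·t + μ·t on D = {(t, ℓ) : t > 0, 0 ≤ ℓ ≤ R} ∪ {(0, 0)}. If (t, ℓ) ∈ D with t > 0 and 0 < ℓ < R minimizes J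 over D, then ℓ/t = r* and ℓ = R − √((T²/(3·κ·C³))·(α/λ + β'(r*)/g̃)), where r* > 0 is the unique solution of g(r) = −g̃·(μ/λ + p_c). -/
/-- Necessity direction of Lemma 2 (KKT): any interior minimizer `(t, ℓ)` of
the Lagrangian subproblem objective `J` on `D` must have offloading rate
`ℓ/t = r*` and `ℓ = R − √((T²/(3κC³))·(α/λ + β'(r*)/g̃))`, where `r* > 0` is
the unique solution of `g(r) = −g̃·(μ/λ + p_c)`. -/
theorem stmt7 (σ2 B : ℝ) (hσ2 : 0 < σ2) (hB : 0 < B)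
    (β β' g : ℝ → ℝ)
    (hβ : ∀ x, β x = σ2 * ((2 : ℝ) ^ (x / B) - 1))
    (hβ' : ∀ x, β' x = σ2 * Real.log 2 / B * (2 : ℝ) ^ (x / B))
    (hg : ∀ x, g x = β x - x * β' x)
    (lam μ α κ C R T gtld pc : ℝ)
    (hlam : 0 < lam) (hμ : 0 ≤ μ) (hα : 0 < α) (hκ : 0 < κ) (hC : 0 < C)
    (hR : 0 < R) (hT : 0 < T) (hgtld : 0 < gtld) (hpc : 0 < pc)
    (J : ℝ → ℝ → ℝ)
    (hJ : ∀ t ℓ : ℝ, J t ℓ = α * ℓ + lam * κ * C ^ 3 * (R - ℓ) ^ 3 / T ^ 2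
      + (if t = 0 then 0 else lam * t / gtld * β (ℓ / t)) + lam * pc * t + μ * t)
    (rstar : ℝ) (hrstar : 0 < rstar)
    (hrsol : g rstar = -(gtld * (μ / lam + pc)))
    (t ℓ : ℝ) (ht : 0 < t) (hℓ0 : 0 < ℓ) (hℓR : ℓ < R)
    (hmin : ∀ t' ℓ' : ℝ, ((0 < t' ∧ 0 ≤ ℓ' ∧ ℓ' ≤ R) ∨ (t' = 0 ∧ ℓ' = 0)) →
      J t ℓ ≤ J t' ℓ') :
    ℓ / t = rstar ∧
      ℓ = R - Real.sqrt (T ^ 2 / (3 * κ * C ^ 3) * (α / lam + β' rstar / gtld)) := by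
  have hL : (0:ℝ) < Real.log 2 := Real.log_pos one_lt_two
  set L := Real.log 2 with hLdef
  have hBne : B ≠ 0 := hB.ne'
  have htne : t ≠ 0 := ht.ne'
  have hlamne : lam ≠ 0 := hlam.ne'
  have hgtldne : gtld ≠ 0 := hgtld.ne'
  -- exponential form of β, β'
  have hβe : ∀ x, β x = σ2 * (Real.exp (L * (x / B)) - 1) := by
    intro x; rw [hβ, Real.rpow_def_of_pos two_pos]
  have hβ'e : ∀ x, β' x = σ2 * L / B * Real.exp (L * (x / B)) := by
    intro x; rw [hβ', Real.rpow_def_of_pos two_pos]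
  -- derivative of g
  have hgderiv : ∀ x : ℝ, HasDerivAt g (-(x * σ2 * (L/B)^2 * Real.exp (L * (x/B)))) x := by
    intro x
    have hfun : g = fun y => σ2 * (Real.exp (L * (y / B)) - 1)
        - y * (σ2 * L / B * Real.exp (L * (y / B))) := by
      funext y; rw [hg, hβe, hβ'e]
    rw [hfun]
    have hE : HasDerivAt (fun y : ℝ => Real.exp (L * (y / B)))
        (Real.exp (L * (x / B)) * (L * (1/B))) x := by
      have hinner : HasDerivAt (fun y : ℝ => L * (y / B)) (L * (1 / B)) x := by
        simpa using ((hasDerivAt_id x).div_const B).const_mul L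
      exact hinner.exp
    have h1 : HasDerivAt (fun y : ℝ => σ2 * (Real.exp (L * (y / B)) - 1))
        (σ2 * (Real.exp (L * (x / B)) * (L * (1/B)))) x := (hE.sub_const 1).const_mul σ2
    have h2 : HasDerivAt (fun y : ℝ => y * (σ2 * L / B * Real.exp (L * (y / B))))
        (1 * (σ2 * L / B * Real.exp (L * (x/B)))
          + x * (σ2 * L / B * (Real.exp (L * (x / B)) * (L * (1/B))))) x :=
      (hasDerivAt_id x).mul (hE.const_mul (σ2 * L / B))
    have h3 := h1.sub h2
    refine h3.congr_deriv ?_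
    field_simp
    ring
  -- g is strictly decreasing on [0, ∞)
  have hganti : StrictAntiOn g (Set.Ici 0) := by
    apply strictAntiOn_of_deriv_neg (convex_Ici 0)
    · exact fun x _ => (hgderiv x).continuousAt.continuousWithinAt
    · intro x hx
      rw [interior_Ici] at hx
      have hx' : (0:ℝ) < x := hx
      rw [(hgderiv x).deriv]
      have : 0 < x * σ2 * (L/B)^2 * Real.exp (L * (x/B)) :=
        mul_pos (mul_pos (mul_pos hx' hσ2) (pow_pos (div_pos hL hB) 2)) (Real.exp_pos _)
      linarith
  -- stationarity in t
  have hlocal_t : IsLocalMin (fun s => J s ℓ) t := by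
    have hs : ∀ᶠ s in nhds t, 0 < s := eventually_gt_nhds ht
    exact hs.mono fun s hs0 => hmin s ℓ (Or.inl ⟨hs0, hℓ0.le, hℓR.le⟩)
  have hφ : HasDerivAt (fun s => J s ℓ) (lam/gtld * g (ℓ/t) + (lam*pc + μ)) t := by
    have hE' : HasDerivAt (fun s : ℝ => Real.exp (L * ((ℓ / s) / B)))
        (Real.exp (L * ((ℓ/t)/B)) * (L * ((ℓ * -((t^2)⁻¹)) / B))) t := by
      have hinv : HasDerivAt (fun s : ℝ => ℓ / s) (ℓ * -((t^2)⁻¹)) t := by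
        simpa [div_eq_mul_inv] using (hasDerivAt_inv htne).const_mul ℓ
      exact ((hinv.div_const B).const_mul L).exp
    have ha : HasDerivAt (fun s : ℝ => lam * s / gtld) (lam / gtld) t := by
      simpa using ((hasDerivAt_id t).const_mul lam).div_const gtld
    have h3 : HasDerivAt (fun s : ℝ => lam * s / gtld * (σ2 * (Real.exp (L * ((ℓ / s)/B)) - 1)))
        (lam / gtld * (σ2 * (Real.exp (L * ((ℓ/t)/B)) - 1))
          + lam * t / gtld * (σ2 * (Real.exp (L * ((ℓ/t)/B)) * (L * ((ℓ * -((t^2)⁻¹)) / B))))) t :=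
      ha.mul ((hE'.sub_const 1).const_mul σ2)
    have hcore : HasDerivAt (fun s : ℝ => α * ℓ + lam * κ * C ^ 3 * (R - ℓ) ^ 3 / T ^ 2
        + lam * s / gtld * (σ2 * (Real.exp (L * ((ℓ / s)/B)) - 1)) + lam * pc * s + μ * s)
        (lam / gtld * (σ2 * (Real.exp (L * ((ℓ/t)/B)) - 1))
          + lam * t / gtld * (σ2 * (Real.exp (L * ((ℓ/t)/B)) * (L * ((ℓ * -((t^2)⁻¹)) / B))))
          + lam * pc + μ) t := by
      have hc1 : HasDerivAt (fun s : ℝ => lam * pc * s) (lam * pc) t := by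
        simpa using (hasDerivAt_id t).const_mul (lam * pc)
      have hc2 : HasDerivAt (fun s : ℝ => μ * s) μ t := by
        simpa using (hasDerivAt_id t).const_mul μ
      have := (((h3.const_add (α * ℓ + lam * κ * C ^ 3 * (R - ℓ) ^ 3 / T ^ 2)).add hc1).add hc2)
      exact this
    have heq : (fun s => J s ℓ) =ᶠ[nhds t]
        (fun s : ℝ => α * ℓ + lam * κ * C ^ 3 * (R - ℓ) ^ 3 / T ^ 2
          + lam * s / gtld * (σ2 * (Real.exp (L * ((ℓ / s)/B)) - 1)) + lam * pc * s + μ * s) := by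
      filter_upwards [eventually_gt_nhds ht] with s hs
      rw [hJ, if_neg hs.ne', hβe]
    have hmain := hcore.congr_of_eventuallyEq heq
    refine hmain.congr_deriv ?_
    rw [hg, hβe, hβ'e]
    field_simp
    ring
  have heq_t : lam/gtld * g (ℓ/t) + (lam*pc + μ) = 0 :=
    hlocal_t.hasDerivAt_eq_zero hφ
  have hgr : g (ℓ/t) = g rstar := by
    rw [hrsol]
    field_simp at heq_t ⊢
    linarith
  have hr : ℓ / t = rstar :=
    hganti.injOn (Set.mem_Ici.mpr (div_pos hℓ0 ht).le) (Set.mem_Ici.mpr hrstar.le) hgr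
  refine ⟨hr, ?_⟩
  -- stationarity in ℓ
  have hlocal_l : IsLocalMin (fun u => J t u) ℓ := by
    have hs : ∀ᶠ u in nhds ℓ, u ∈ Set.Ioo 0 R :=
      isOpen_Ioo.eventually_mem (⟨hℓ0, hℓR⟩ : ℓ ∈ Set.Ioo 0 R)
    exact hs.mono fun u hu => hmin t u (Or.inl ⟨ht, hu.1.le, hu.2.le⟩)
  have hψ : HasDerivAt (fun u => J t u)
      (α - 3 * lam * κ * C ^ 3 * (R - ℓ) ^ 2 / T ^ 2 + lam / gtld * β' (ℓ/t)) ℓ := by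
    have hfun : (fun u => J t u) = fun u : ℝ => α * u + lam * κ * C ^ 3 * (R - u) ^ 3 / T ^ 2
        + lam * t / gtld * (σ2 * (Real.exp (L * ((u / t)/B)) - 1)) + lam * pc * t + μ * t := by
      funext u; rw [hJ, if_neg htne, hβe]
    rw [hfun]
    have hA : HasDerivAt (fun u : ℝ => α * u) α ℓ := by
      simpa using (hasDerivAt_id ℓ).const_mul α
    have hB3 : HasDerivAt (fun u : ℝ => lam * κ * C ^ 3 * (R - u) ^ 3 / T ^ 2)
        (lam * κ * C ^ 3 * ((3:ℕ) * (R - ℓ) ^ 2 * (-1)) / T ^ 2) ℓ := by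
      have h0 : HasDerivAt (fun u : ℝ => R - u) (-1) ℓ := by
        simpa using (hasDerivAt_id ℓ).const_sub R
      exact ((h0.pow 3).const_mul (lam * κ * C ^ 3)).div_const (T ^ 2)
    have hEx : HasDerivAt (fun u : ℝ => lam * t / gtld * (σ2 * (Real.exp (L * ((u / t)/B)) - 1)))
        (lam * t / gtld * (σ2 * (Real.exp (L * ((ℓ/t)/B)) * (L * ((1/t)/B))))) ℓ := by
      have hinner : HasDerivAt (fun u : ℝ => L * ((u / t)/B)) (L * ((1/t)/B)) ℓ := by
        simpa using (((hasDerivAt_id ℓ).div_const t).div_const B).const_mul L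
      exact ((hinner.exp.sub_const 1).const_mul σ2).const_mul (lam * t / gtld)
    have := (((hA.add hB3).add hEx).add_const (lam * pc * t)).add_const (μ * t)
    refine this.congr_deriv ?_
    rw [hβ'e]
    field_simp
    ring
  have heq_l : α - 3 * lam * κ * C ^ 3 * (R - ℓ) ^ 2 / T ^ 2 + lam / gtld * β' (ℓ/t) = 0 :=
    hlocal_l.hasDerivAt_eq_zero hψ
  rw [hr] at heq_l
  have hsq : T ^ 2 / (3 * κ * C ^ 3) * (α / lam + β' rstar / gtld) = (R - ℓ) ^ 2 := by
    have hTne : T ≠ 0 := hT.ne'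
    have hκne : κ ≠ 0 := hκ.ne'
    have hCne : C ≠ 0 := hC.ne'
    field_simp at heq_l ⊢
    nlinarith [heq_l]
  rw [hsq, Real.sqrt_sq (by linarith : (0:ℝ) ≤ R - ℓ)]
  ring
end

section
/- Let σ2 > 0, B > 0, β(x) = σ2·(2^{x/B} − 1), and fix κ > 0, C > 0, R > 0, T > 0, g̃ > 0, p_c > 0. The function (t, ℓ) ↦ κ·C³·(R − ℓ)³/T² + (t/g̃)·β(ℓ/t) + p_c·t, with the middle term defined as 0 at (t, ℓ) = (0, 0), is convex on the set {(t, ℓ) : t > 0, 0 ≤ ℓ ≤ R} ∪ {(0, 0)}. -/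
/-!
The transmit energy `(t/g̃)·β(ℓ/t)` is `1/g̃` times the perspective `(t, ℓ) ↦ t·β(ℓ/t)` of the
convex function `β`. Extended by `0` on `t = 0`, a perspective is positively homogeneous and
subadditive on the cone `{t > 0} ∪ {0}`, hence convex there; subadditivity is convexity of `β`
applied with the weights `t₁/(t₁+t₂)` and `t₂/(t₁+t₂)`. The local-computing energy is a
nonnegative multiple of `(R − ℓ)³`, convex for `ℓ ≤ R`, and the circuit energy is linear.
-/

open Set

noncomputable section

def perspective (f : ℝ → ℝ) (p : ℝ × ℝ) : ℝ :=
  if p.1 = 0 then 0 else p.1 * f (p.2 / p.1)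

def perspectiveCone : PointedCone ℝ (ℝ × ℝ) :=
  ConvexCone.toPointedCone
    { carrier := {p | 0 < p.1 ∨ p = 0}
      smul_mem' := by
        rintro c hc p (hp | rfl)
        · exact Or.inl (mul_pos hc hp)
        · exact Or.inr (smul_zero c)
      add_mem' := by
        rintro p (hp | rfl) q (hq | rfl)
        · exact Or.inl (add_pos hp hq)
        · simpa using Or.inl hp
        · simpa using Or.inl hq
        · simp }
    (Or.inr rfl)

end

lemma mem_perspectiveCone {p : ℝ × ℝ} : p ∈ perspectiveCone ↔ 0 < p.1 ∨ p = 0 := Iff.rfl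

@[simp] lemma perspective_zero (f : ℝ → ℝ) : perspective f 0 = 0 := by simp [perspective]

lemma perspective_smul (f : ℝ → ℝ) (c : ℝ) (p : ℝ × ℝ) :
    perspective f (c • p) = c * perspective f p := by
  rcases eq_or_ne c 0 with rfl | hc
  · simp
  by_cases hp : p.1 = 0
  · simp [perspective, hp]
  · simp only [perspective, Prod.smul_fst, Prod.smul_snd, smul_eq_mul, mul_eq_zero, hc, hp,
      or_self, if_false, mul_div_mul_left _ _ hc]
    ring

lemma perspective_add_le {f : ℝ → ℝ} (hf : ConvexOn ℝ univ f) {p q : ℝ × ℝ}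
    (hp : p ∈ perspectiveCone) (hq : q ∈ perspectiveCone) :
    perspective f (p + q) ≤ perspective f p + perspective f q := by
  obtain rfl | hp := hp.symm
  · simp
  obtain rfl | hq := hq.symm
  · simp
  simp only [perspective, Prod.fst_add, Prod.snd_add, if_neg hp.ne', if_neg hq.ne']
  set t := p.1 + q.1
  have ht : 0 < t := add_pos hp hq
  rw [if_neg ht.ne']
  have hslope : (p.1 / t) • (p.2 / p.1) + (q.1 / t) • (q.2 / q.1) = (p.2 + q.2) / t := by
    simp only [smul_eq_mul]; field_simp
  have key := hf.2 (mem_univ (p.2 / p.1)) (mem_univ (q.2 / q.1)) (div_nonneg hp.le ht.le)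
    (div_nonneg hq.le ht.le) (by rw [← add_div, div_self ht.ne'])
  rw [hslope, smul_eq_mul, smul_eq_mul] at key
  calc t * f ((p.2 + q.2) / t)
      ≤ t * (p.1 / t * f (p.2 / p.1) + q.1 / t * f (q.2 / q.1)) := by gcongr
    _ = p.1 * f (p.2 / p.1) + q.1 * f (q.2 / q.1) := by field_simp

lemma convexOn_perspective {f : ℝ → ℝ} (hf : ConvexOn ℝ univ f) :
    ConvexOn ℝ perspectiveCone (perspective f) := by
  refine ⟨perspectiveCone.convex, fun p hp q hq a b ha hb _ => ?_⟩
  calc perspective f (a • p + b • q)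
      ≤ perspective f (a • p) + perspective f (b • q) :=
        perspective_add_le hf (perspectiveCone.smul_mem ha hp) (perspectiveCone.smul_mem hb hq)
    _ = a • perspective f p + b • perspective f q := by
        rw [perspective_smul, perspective_smul, smul_eq_mul, smul_eq_mul]

lemma convexOn_rpow_div {b : ℝ} (hb : 0 < b) (B : ℝ) :
    ConvexOn ℝ univ (fun x : ℝ => b ^ (x / B)) :=
  ((convexOn_rpow_left hb).comp_linearMap (B⁻¹ • LinearMap.id)).congr fun x _ => by
    simp [div_eq_inv_mul]

lemma convexOn_const_sub_pow (n : ℕ) (R : ℝ) : ConvexOn ℝ (Iic R) (fun x : ℝ => (R - x) ^ n) := by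
  have h := (convexOn_pow n).comp_affineMap (AffineMap.const ℝ ℝ R - AffineMap.id ℝ ℝ)
  have hpre : (AffineMap.const ℝ ℝ R - AffineMap.id ℝ ℝ) ⁻¹' Ici 0 = Iic R := by ext x; simp
  rw [hpre] at h
  exact h.congr fun x _ => by simp

lemma perspectiveCone_inter_snd_preimage_Icc {R : ℝ} (hR : 0 ≤ R) :
    (perspectiveCone : Set (ℝ × ℝ)) ∩ Prod.snd ⁻¹' Icc 0 R
      = {p : ℝ × ℝ | 0 < p.1 ∧ 0 ≤ p.2 ∧ p.2 ≤ R} ∪ {(0, 0)} := by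
  ext ⟨t, l⟩
  simp only [mem_inter_iff, SetLike.mem_coe, mem_perspectiveCone, mem_preimage, mem_Icc,
    mem_union, mem_ofPred_eq, mem_singleton_iff, Prod.mk_eq_zero, Prod.mk.injEq]
  constructor
  · rintro ⟨ht | ⟨rfl, rfl⟩, hl⟩
    exacts [Or.inl ⟨ht, hl⟩, Or.inr ⟨rfl, rfl⟩]
  · rintro (⟨ht, hl⟩ | ⟨rfl, rfl⟩)
    exacts [⟨Or.inl ht, hl⟩, ⟨Or.inr ⟨rfl, rfl⟩, le_rfl, hR⟩]

theorem stmt13_general (σ2 B : ℝ) (hσ2 : 0 < σ2)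
    (β : ℝ → ℝ) (hβ : ∀ x, β x = σ2 * ((2 : ℝ) ^ (x / B) - 1))
    (κ C R T gtld pc : ℝ)
    (hκ : 0 < κ) (hC : 0 < C) (hR : 0 < R)
    (hgtld : 0 < gtld)
    (E : ℝ × ℝ → ℝ)
    (hE : ∀ p : ℝ × ℝ, E p = κ * C ^ 3 * (R - p.2) ^ 3 / T ^ 2
      + (if p.1 = 0 then 0 else p.1 / gtld * β (p.2 / p.1)) + pc * p.1) :
    ConvexOn ℝ ({p : ℝ × ℝ | 0 < p.1 ∧ 0 ≤ p.2 ∧ p.2 ≤ R} ∪ {(0, 0)}) E := by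
  rw [← perspectiveCone_inter_snd_preimage_Icc hR.le]
  have hdom : Convex ℝ ((perspectiveCone : Set (ℝ × ℝ)) ∩ Prod.snd ⁻¹' Icc 0 R) :=
    perspectiveCone.convex.inter ((convex_Icc 0 R).linear_preimage (LinearMap.snd ℝ ℝ ℝ))
  have hβ_convex : ConvexOn ℝ univ β :=
    (((convexOn_rpow_div two_pos B).add_const (-1)).smul hσ2.le).congr fun x _ => by
      simp [hβ, sub_eq_add_neg]
  have hlocal : ConvexOn ℝ (Prod.snd ⁻¹' Iic R)
      fun p : ℝ × ℝ => κ * C ^ 3 * (R - p.2) ^ 3 / T ^ 2 :=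
    (((convexOn_const_sub_pow 3 R).comp_linearMap (LinearMap.snd ℝ ℝ ℝ)).smul
      (by positivity : 0 ≤ κ * C ^ 3 / T ^ 2)).congr fun p _ => by
      simp only [LinearMap.coe_snd, Function.comp_apply, smul_eq_mul]; ring
  have htransmit : ConvexOn ℝ perspectiveCone
      fun p : ℝ × ℝ => if p.1 = 0 then 0 else p.1 / gtld * β (p.2 / p.1) :=
    ((convexOn_perspective hβ_convex).smul (inv_nonneg.2 hgtld.le)).congr fun p _ => by
      simp only [perspective, smul_eq_mul]; split_ifs <;> ring
  have hcircuit : ConvexOn ℝ ((perspectiveCone : Set (ℝ × ℝ)) ∩ Prod.snd ⁻¹' Icc 0 R)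
      fun p : ℝ × ℝ => pc * p.1 :=
    (pc • LinearMap.fst ℝ ℝ ℝ).convexOn hdom
  exact (((hlocal.subset (fun p hp => hp.2.2) hdom).add
    (htransmit.subset inter_subset_left hdom)).add hcircuit).congr fun p _ => (hE p).symm

/-- Joint convexity of one user's total energy
`κ·C³·(R − ℓ)³/T² + (t/g̃)·β(ℓ/t) + p_c·t` on
`{(t, ℓ) : t > 0, 0 ≤ ℓ ≤ R} ∪ {(0,0)}`, which makes problem (P1.1) convex. -/
theorem stmt13 (σ2 B : ℝ) (hσ2 : 0 < σ2) (hB : 0 < B)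
    (β : ℝ → ℝ) (hβ : ∀ x, β x = σ2 * ((2 : ℝ) ^ (x / B) - 1))
    (κ C R T gtld pc : ℝ)
    (hκ : 0 < κ) (hC : 0 < C) (hR : 0 < R) (hT : 0 < T)
    (hgtld : 0 < gtld) (hpc : 0 < pc)
    (E : ℝ × ℝ → ℝ)
    (hE : ∀ p : ℝ × ℝ, E p = κ * C ^ 3 * (R - p.2) ^ 3 / T ^ 2
      + (if p.1 = 0 then 0 else p.1 / gtld * β (p.2 / p.1)) + pc * p.1) :
    ConvexOn ℝ ({p : ℝ × ℝ | 0 < p.1 ∧ 0 ≤ p.2 ∧ p.2 ≤ R} ∪ {(0, 0)}) E :=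
  stmt13_general σ2 B hσ2 β hβ κ C R T gtld pc hκ hC hR hgtld E hE
end

section
/- Let σ2 > 0, B > 0, β(x) = σ2·(2^{x/B} − 1), β'(x) = (σ2·ln 2 / B)·2^{x/B}, g(x) = β(x) − x·β'(x), and fix c > 0. For g̃ > 0 let r(g̃) > 0 be the unique solution of g(r) = −g̃·c. Then the map g̃ ↦ r(g̃) is strictly increasing, and the map g̃ ↦ β'(r(g̃))/g̃ is strictly decreasing. Consequently, for any α ≥ 0, λ > 0, κ > 0, C > 0, R > 0, T > 0, the quantity ℓ(g̃) = max(R − √((T²/(3·κ·C³))·(α/λ + β'(r(g̃))/g̃)), 0) is nondecreasing in g̃. -/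
/-!
Substitute `u = log 2 · r / B`, so that `2 ^ (r / B) = exp u`. Then
`-g r = σ2 · exp u · (exp (-u) - (1 - u))` and `β' r = (σ2 · log 2 / B) · exp u`, hence the rate
equation `g (r g̃) = -g̃ c` reads `σ2 · exp u · γ u = g̃ c` with `γ u = exp (-u) - (1 - u)`, and
`β' (r g̃) / g̃ = (log 2 · c / B) / γ u`. The gap `γ` between `exp (-u)` and its tangent line at `0`
is positive and strictly increasing for `u > 0`, so `u` (hence `r`) increases with `g̃`, while
`β' (r g̃) / g̃` decreases; `ℓ` is then a nonincreasing function of a decreasing quantity.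
-/

open Real Set

noncomputable def expTangentGap (u : ℝ) : ℝ := exp (-u) - (1 - u)

lemma expTangentGap_nonneg (u : ℝ) : 0 ≤ expTangentGap u := by
  have := add_one_le_exp (-u)
  unfold expTangentGap
  linarith

lemma expTangentGap_pos {u : ℝ} (hu : u ≠ 0) : 0 < expTangentGap u := by
  have := add_one_lt_exp (neg_ne_zero.mpr hu)
  unfold expTangentGap
  linarith

lemma expTangentGap_strictMonoOn : StrictMonoOn expTangentGap (Ici 0) := by
  intro u (hu : 0 ≤ u) v _ huv
  have htangent : u - v + 1 < exp (u - v) := add_one_lt_exp (sub_ne_zero.mpr huv.ne)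
  have hexp_le : exp (-u) ≤ 1 := exp_le_one_iff.mpr (neg_nonpos.mpr hu)
  have hsplit : exp (-v) = exp (-u) * exp (u - v) := by rw [← exp_add]; ring_nf
  unfold expTangentGap
  rw [hsplit]
  nlinarith [exp_pos (-u)]

lemma exp_mul_expTangentGap_strictMonoOn :
    StrictMonoOn (fun u => exp u * expTangentGap u) (Ici 0) := by
  intro u hu v hv huv
  calc exp u * expTangentGap u ≤ exp v * expTangentGap u := by
        gcongr
        exact expTangentGap_nonneg u
    _ < exp v * expTangentGap v := by
        gcongr
        exact expTangentGap_strictMonoOn hu hv huv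

section Channel

variable {σ2 B : ℝ} {β β' g : ℝ → ℝ}

lemma two_rpow_div_eq_exp (x : ℝ) : (2 : ℝ) ^ (x / B) = exp (log 2 * (x / B)) :=
  rpow_def_of_pos two_pos _

lemma g_eq_neg_exp_mul_expTangentGap (hB : B ≠ 0)
    (hβ : ∀ x, β x = σ2 * ((2 : ℝ) ^ (x / B) - 1))
    (hβ' : ∀ x, β' x = σ2 * log 2 / B * (2 : ℝ) ^ (x / B))
    (hg : ∀ x, g x = β x - x * β' x) (x : ℝ) :
    g x = -(σ2 * (exp (log 2 * (x / B)) * expTangentGap (log 2 * (x / B)))) := by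
  rw [hg, hβ, hβ', two_rpow_div_eq_exp, expTangentGap, exp_neg]
  field_simp
  ring

end Channel

lemma monotoneOn_max_sub_sqrt_of_antitoneOn {f : ℝ → ℝ} {s : Set ℝ} (hf : AntitoneOn f s)
    {K : ℝ} (hK : 0 ≤ K) (a R : ℝ) :
    MonotoneOn (fun x => max (R - sqrt (K * (a + f x))) 0) s := by
  intro x hx y hy hxy
  have hsqrt : sqrt (K * (a + f y)) ≤ sqrt (K * (a + f x)) := by
    gcongr
    exact hf hx hy hxy
  exact max_le_max (sub_le_sub_left hsqrt R) le_rfl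

/-- Remark 1, property 4.1: as the channel gain `g̃` increases, the optimal
offloading rate `r(g̃)` (the unique solution of `g(r) = −g̃·c`) strictly
increases, `β'(r(g̃))/g̃` strictly decreases, and hence the optimal number of
offloaded bits `ℓ(g̃)` is nondecreasing. -/
theorem stmt14 (σ2 B : ℝ) (hσ2 : 0 < σ2) (hB : 0 < B)
    (β β' g : ℝ → ℝ)
    (hβ : ∀ x, β x = σ2 * ((2 : ℝ) ^ (x / B) - 1))
    (hβ' : ∀ x, β' x = σ2 * Real.log 2 / B * (2 : ℝ) ^ (x / B))
    (hg : ∀ x, g x = β x - x * β' x)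
    (c : ℝ) (hc : 0 < c)
    (r : ℝ → ℝ)
    (hr : ∀ gtld : ℝ, 0 < gtld → 0 < r gtld ∧ g (r gtld) = -(gtld * c)) :
    StrictMonoOn r (Set.Ioi 0) ∧
    StrictAntiOn (fun gtld => β' (r gtld) / gtld) (Set.Ioi 0) ∧
    ∀ α lam κ C R T : ℝ, 0 ≤ α → 0 < lam → 0 < κ → 0 < C → 0 < R → 0 < T →
      MonotoneOn (fun gtld =>
        max (R - Real.sqrt (T ^ 2 / (3 * κ * C ^ 3) * (α / lam + β' (r gtld) / gtld))) 0)
        (Set.Ioi 0) := by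
  have hlog2 : 0 < log 2 := log_pos one_lt_two
  set u : ℝ → ℝ := fun gt => log 2 * (r gt / B) with hu
  have hu_pos : ∀ gt, 0 < gt → 0 < u gt := fun gt hgt => mul_pos hlog2 (div_pos (hr gt hgt).1 hB)
  have hrate : ∀ gt, 0 < gt → σ2 * (exp (u gt) * expTangentGap (u gt)) = gt * c := by
    intro gt hgt
    have := (hr gt hgt).2
    rw [g_eq_neg_exp_mul_expTangentGap hB.ne' hβ hβ' hg] at this
    linarith
  have hu_mono : StrictMonoOn u (Ioi 0) := by
    intro g₁ h₁ g₂ h₂ h₁₂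
    refine (exp_mul_expTangentGap_strictMonoOn.lt_iff_lt (hu_pos g₁ h₁).le (hu_pos g₂ h₂).le).mp ?_
    refine lt_of_mul_lt_mul_left ?_ hσ2.le
    rw [hrate g₁ h₁, hrate g₂ h₂]
    exact mul_lt_mul_of_pos_right h₁₂ hc
  have hratio : ∀ gt, 0 < gt → β' (r gt) / gt = log 2 * c / B / expTangentGap (u gt) := by
    intro gt hgt
    have hγ := expTangentGap_pos (hu_pos gt hgt).ne'
    rw [div_eq_div_iff hgt.ne' hγ.ne', hβ', two_rpow_div_eq_exp]
    linear_combination log 2 / B * hrate gt hgt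
  have hanti : StrictAntiOn (fun gt => β' (r gt) / gt) (Ioi 0) := by
    intro g₁ h₁ g₂ h₂ h₁₂
    simp only [hratio g₁ h₁, hratio g₂ h₂]
    exact div_lt_div_of_pos_left (by positivity) (expTangentGap_pos (hu_pos g₁ h₁).ne')
      (expTangentGap_strictMonoOn (hu_pos g₁ h₁).le (hu_pos g₂ h₂).le (hu_mono h₁ h₂ h₁₂))
  refine ⟨fun g₁ h₁ g₂ h₂ h₁₂ => ?_, hanti, fun α lam κ C R T _ _ hκ hC _ _ => ?_⟩
  · have := hu_mono h₁ h₂ h₁₂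
    simp only [hu] at this
    exact (div_lt_div_iff_of_pos_right hB).mp (lt_of_mul_lt_mul_left this hlog2.le)
  · exact monotoneOn_max_sub_sqrt_of_antitoneOn hanti.antitoneOn (by positivity) _ R
end
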